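/- If two scenario trees differ only in that one scenario's demand is pointwise larger, then the optimal value of the pre-positioning model is weakly larger for the tree with larger demand (monotonicity of optimal cost in demand). -/
import Mathlib


open Finset

/-- The relaxed pre-positioning model, where shortage satisfies the
inequalities `g_j^{cs} ≥ d_j^{cs} - ∑_{i,t} y_{ijt}^{cs}` and `g_j^{cs} ≥ 0`
(it has the same optimal value as the equality model when `v^c ≥ 0`). -/
def FeasibleR {Cc ι J S : Type*} [Fintype Cc] [Fintype ι] [Fintype J]
    (Tmax : ℕ) (parent : S → S) (root : S)
    (b : Cc → ℝ) (M : ι → ℝ) (d : Cc → J → S → ℝ)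
    (x : Cc → ι → S → ℝ) (y : Cc → ι → J → ℕ → S → ℝ)
    (g : Cc → J → S → ℝ) (h : Cc → ι → ℕ → S → ℝ) : Prop :=
  (∀ c i s, 0 ≤ x c i s) ∧
  (∀ c i j t s, 0 ≤ y c i j t s) ∧
  (∀ c j s, 0 ≤ g c j s) ∧
  (∀ c i t s, 0 ≤ h c i t s) ∧
  (∀ c i t, 2 ≤ t → h c i t root = 0) ∧
  (∀ c i s, h c i 1 s = x c i s) ∧
  (∀ c i t s, 2 ≤ t → t ≤ Tmax → s ≠ root →
    h c i t s = h c i (t - 1) (parent s) - ∑ j, y c i j t s) ∧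
  (∀ i s, ∑ c, ∑ t ∈ Icc 1 Tmax, b c * h c i t s ≤ M i) ∧
  (∀ c j s, d c j s - ∑ i, ∑ t ∈ Icc 1 Tmax, y c i j t s ≤ g c j s)

/-- The objective of the pre-positioning model. -/
def Obj {Cc ι J S : Type*} [Fintype Cc] [Fintype ι] [Fintype J] [Fintype S]
    (Tmax : ℕ) (p : S → ℝ) (q : Cc → ℝ) (o : Cc → ι → J → ℝ)
    (u : Cc → ℝ) (v : Cc → ℝ) (r : Cc → ℝ)
    (x : Cc → ι → S → ℝ) (y : Cc → ι → J → ℕ → S → ℝ)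
    (g : Cc → J → S → ℝ) (h : Cc → ι → ℕ → S → ℝ) : ℝ :=
  ∑ s, p s *
    ((∑ c, ∑ i, q c * x c i s) +
     (∑ c, ∑ i, ∑ j, ∑ t ∈ Icc 1 Tmax, o c i j * y c i j t s) +
     (∑ c, ∑ i, ∑ t ∈ Icc 1 Tmax, u c * h c i t s) +
     (∑ c, ∑ j, v c * g c j s) +
     (∑ c, ∑ i, r c * h c i Tmax s))

/-- Monotonicity of the optimal cost in demand (in the relaxed model): if the
demand vectors satisfy `d ≤ d'` componentwise, `z = (x, y, g, h)` is optimal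
for demand `d` and `z' = (x', y', g', h')` is optimal for demand `d'`, then
`V(d) ≤ V(d')`. -/
theorem optimal_value_monotone_in_demand
    {Cc ι J S : Type*} [Fintype Cc] [Fintype ι] [Fintype J] [Fintype S]
    (Tmax : ℕ) (parent : S → S) (root : S)
    (b : Cc → ℝ) (M : ι → ℝ)
    (p : S → ℝ) (q : Cc → ℝ) (o : Cc → ι → J → ℝ) (u v r : Cc → ℝ)
    (d d' : Cc → J → S → ℝ) (hdd : ∀ c j s, d c j s ≤ d' c j s)
    (x : Cc → ι → S → ℝ) (y : Cc → ι → J → ℕ → S → ℝ)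
    (g : Cc → J → S → ℝ) (h : Cc → ι → ℕ → S → ℝ)
    (x' : Cc → ι → S → ℝ) (y' : Cc → ι → J → ℕ → S → ℝ)
    (g' : Cc → J → S → ℝ) (h' : Cc → ι → ℕ → S → ℝ)
    (hopt : FeasibleR Tmax parent root b M d x y g h ∧
      ∀ x₀ y₀ g₀ h₀, FeasibleR Tmax parent root b M d x₀ y₀ g₀ h₀ →
        Obj Tmax p q o u v r x y g h ≤ Obj Tmax p q o u v r x₀ y₀ g₀ h₀)
    (hopt' : FeasibleR Tmax parent root b M d' x' y' g' h' ∧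
      ∀ x₀ y₀ g₀ h₀, FeasibleR Tmax parent root b M d' x₀ y₀ g₀ h₀ →
        Obj Tmax p q o u v r x' y' g' h' ≤ Obj Tmax p q o u v r x₀ y₀ g₀ h₀) :
    Obj Tmax p q o u v r x y g h ≤ Obj Tmax p q o u v r x' y' g' h' := by
  apply hopt.2
  obtain ⟨h1,h2,h3,h4,h5,h6,h7,h8,h9⟩ := hopt'.1
  exact ⟨h1,h2,h3,h4,h5,h6,h7,h8, fun c j s => le_trans (by linarith [hdd c j s]) (h9 c j s)⟩
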